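/- arXiv:1702.07604 — 4 statements merged into one kernel-verified Lean document; each statement's English description precedes it below -/
import Mathlib

section
/- Let π be a noncrossing matching of size n and let 2 ≤ j ≤ 2n−2. Then every σ ∈ NC_n with e_j(σ) = π satisfies either π ↗_j σ or σ ≤ π; in other words, e_j^{−1}(π) ⊆ {σ : π ↗_j σ} ∪ {σ : σ ≤ π}. -/
attribute [local instance] Classical.propDecidable

open MvPolynomial

/-! ### Noncrossing matchings -/

/-- `f` encodes a noncrossing perfect matching of the points `0, …, 2n-1`
(point `p` of the paper, which is 1-indexed, corresponds to index `p-1`):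
`f` is a fixed-point-free involution and no two arches cross. -/
def IsNCMatching (n : ℕ) (f : Fin (2*n) → Fin (2*n)) : Prop :=
  (∀ i, f (f i) = i) ∧ (∀ i, f i ≠ i) ∧
    ∀ i j : Fin (2*n), i < j → j < f i → f i < f j → False

/-- The type of noncrossing matchings of size `n`. -/
def NCM (n : ℕ) := {f : Fin (2*n) → Fin (2*n) // IsNCMatching n f}

noncomputable instance (n : ℕ) : Fintype (NCM n) := by
  unfold NCM; exact Fintype.ofFinite _

/-- The noncrossing matching `()_n` consisting of `n` nested arches. -/
def nestedNC (n : ℕ) : NCM n :=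
  ⟨fun i => ⟨2*n - 1 - i.val, by have := i.isLt; omega⟩, by
    refine ⟨fun i => ?_, fun i => ?_, fun i j h1 h2 h3 => ?_⟩
    · have := i.isLt
      apply Fin.ext
      show 2*n - 1 - (2*n - 1 - i.val) = i.val
      omega
    · have := i.isLt
      intro h
      have h' : 2*n - 1 - i.val = i.val := congrArg Fin.val h
      omega
    · have hi := i.isLt; have hj := j.isLt
      rw [Fin.lt_def] at h1 h2 h3
      have e2 : j.val < 2*n - 1 - i.val := h2
      have e3 : 2*n - 1 - i.val < 2*n - 1 - j.val := h3
      omega⟩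

/-- The Temperley–Lieb operator `e_j` (with `j` the 1-indexed label of the paper,
acting on points `j`, `j+1`, cyclically identifying `2n+1` with `1`;
point `p` corresponds to index `p-1`). -/
def TLe (m : ℕ) (j : ℕ) (f : Fin m → Fin m) : Fin m → Fin m :=
  fun i =>
    let a : Fin m := ⟨(j - 1) % m, Nat.mod_lt _ i.pos⟩
    let b : Fin m := ⟨j % m, Nat.mod_lt _ i.pos⟩
    if i = a then b else if i = b then a
    else if f i = a then f b else if f i = b then f a else f i

/-- Concatenation `σπ` of two matchings (as functions on points). -/
def concatF (n n' : ℕ) (f : Fin (2*n) → Fin (2*n)) (g : Fin (2*n') → Fin (2*n')) :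
    Fin (2*(n+n')) → Fin (2*(n+n')) := fun i =>
  if h : i.val < 2*n then
    ⟨(f ⟨i.val, h⟩).val, by have := (f ⟨i.val, h⟩).isLt; omega⟩
  else
    ⟨2*n + (g ⟨i.val - 2*n, by have := i.isLt; omega⟩).val,
      by have := (g ⟨i.val - 2*n, by have := i.isLt; omega⟩).isLt; omega⟩

/-- `(π)_m`: the matching `π` (of size `n`) surrounded by `m` nested arches. -/
def nestF (n m : ℕ) (f : Fin (2*n) → Fin (2*n)) :
    Fin (2*(n+m)) → Fin (2*(n+m)) := fun i =>
  if h : i.val < m ∨ 2*n + m ≤ i.val then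
    ⟨2*(n+m) - 1 - i.val, by have := i.isLt; omega⟩
  else
    ⟨m + (f ⟨i.val - m, by have := i.isLt; omega⟩).val,
      by have := (f ⟨i.val - m, by have := i.isLt; omega⟩).isLt; omega⟩

/-- Rotation `ρ` : `i` and `j` are matched in `ρ(π)` iff `i-1` and `j-1` are matched in `π`. -/
def rotF (m : ℕ) (f : Fin m → Fin m) : Fin m → Fin m := fun i =>
  ⟨((f ⟨(i.val + (m - 1)) % m, Nat.mod_lt _ i.pos⟩).val + 1) % m, Nat.mod_lt _ i.pos⟩

/-- The length of the `i`-th row (0-indexed, from the top) of the Young diagram `λ(π)`: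
if `v_0 < … < v_{n-1}` are the (0-indexed) positions of the left endpoints of the arches,
then the `i`-th row from the top has `v_{n-1-i} - (n-1-i)` boxes. -/
noncomputable def lamRowF (n : ℕ) (f : Fin (2*n) → Fin (2*n)) (i : ℕ) : ℕ :=
  if i < n then
    (((Finset.univ.filter fun j : Fin (2*n) => j < f j).sort (· ≤ ·)).map Fin.val).getD
        (n - 1 - i) 0 - (n - 1 - i)
  else 0

/-- `|λ(π)|`, the number of boxes of the Young diagram of `π`. -/
noncomputable def numBoxes (n : ℕ) (f : Fin (2*n) → Fin (2*n)) : ℕ :=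
  ∑ i ∈ Finset.range n, lamRowF n f i

/-- `σ ≤ π`, i.e. `λ(σ)` is contained in `λ(π)`. -/
noncomputable def LamLe (n : ℕ) (f g : Fin (2*n) → Fin (2*n)) : Prop :=
  ∀ i, lamRowF n f i ≤ lamRowF n g i

/-- `σ < π`, i.e. `λ(σ)` is strictly contained in `λ(π)`. -/
noncomputable def LamLt (n : ℕ) (f g : Fin (2*n) → Fin (2*n)) : Prop :=
  LamLe n f g ∧ ∃ i, lamRowF n f i < lamRowF n g i

/-- `σ ↗_j π` : `λ(π)` is obtained from `λ(σ)` by adding one box on the `j`-th diagonal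
(the box in 0-indexed row `r` and 0-indexed column `c` lies on diagonal `n + c - r`,
matching the paper's 1-indexed `n + c - i`). -/
noncomputable def UpArrow (n : ℕ) (f g : Fin (2*n) → Fin (2*n)) (j : ℕ) : Prop :=
  ∃ r, r < n ∧ lamRowF n g r = lamRowF n f r + 1 ∧
    (∀ i, i ≠ r → lamRowF n g i = lamRowF n f i) ∧
    n + lamRowF n f r - r = j

/-- The number of boxes of `λ(π)` lying on the `d`-th diagonal. -/
noncomputable def boxesOnDiag (n : ℕ) (f : Fin (2*n) → Fin (2*n)) (d : ℕ) : ℕ :=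
  ((Finset.range n ×ˢ Finset.range n).filter
    (fun rc => rc.2 < lamRowF n f rc.1 ∧ n + rc.2 - rc.1 = d)).card

/-- The cells `(row, column)` (0-indexed) of the Young diagram `λ(π)`. -/
noncomputable def cellsF (n : ℕ) (f : Fin (2*n) → Fin (2*n)) : Finset (ℕ × ℕ) :=
  (Finset.range n ×ˢ Finset.range n).filter fun rc => rc.2 < lamRowF n f rc.1

/-- `f_{λ(π)}`: the number of standard Young tableaux of shape `λ(π)`, i.e. of
bijective fillings of the cells with `0, …, |λ|-1` strictly increasing along
rows and down columns. -/
noncomputable def numSYT (n : ℕ) (f : Fin (2*n) → Fin (2*n)) : ℕ :=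
  Nat.card {T : {c : ℕ × ℕ // c ∈ cellsF n f} ≃ Fin (cellsF n f).card //
    (∀ a b : {c : ℕ × ℕ // c ∈ cellsF n f}, a.1.1 = b.1.1 → a.1.2 < b.1.2 → T a < T b) ∧
    (∀ a b : {c : ℕ × ℕ // c ∈ cellsF n f}, a.1.2 = b.1.2 → a.1.1 < b.1.1 → T a < T b)}

/-! ### Fully packed loops -/

/-- The vertices relevant for an FPL of size `n`: the `n × n` grid vertices
(`(column, row)`, 0-indexed, row 0 at the top) together with the `4n` external
edge endpoints, indexed counterclockwise starting with the topmost on the left side. -/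
def FVert (n : ℕ) := (Fin n × Fin n) ⊕ (Fin (4*n))

/-- The grid vertex to which the `t`-th external edge is attached
(`t` counted counterclockwise: down the left side, then along the bottom,
up the right side, and along the top). -/
def extVert {n : ℕ} (t : Fin (4*n)) : Fin n × Fin n :=
  if h1 : t.val < n then (⟨0, by omega⟩, ⟨t.val, h1⟩)
  else if h2 : t.val < 2*n then (⟨t.val - n, by omega⟩, ⟨n - 1, by omega⟩)
  else if h3 : t.val < 3*n then (⟨n - 1, by omega⟩, ⟨n - 1 - (t.val - 2*n), by omega⟩)
  else (⟨n - 1 - (t.val - 3*n), by have := t.isLt; omega⟩, ⟨0, by have := t.isLt; omega⟩)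

/-- Adjacency in the `n × n` grid graph. -/
def gridAdj {n : ℕ} (u v : Fin n × Fin n) : Prop :=
  (u.1 = v.1 ∧ (u.2.val + 1 = v.2.val ∨ v.2.val + 1 = u.2.val)) ∨
  (u.2 = v.2 ∧ (u.1.val + 1 = v.1.val ∨ v.1.val + 1 = u.1.val))

/-- Adjacency in the `n × n` grid together with all `4n` external edges. -/
def fullAdj {n : ℕ} : FVert n → FVert n → Prop
  | Sum.inl u, Sum.inl v => gridAdj u v
  | Sum.inl u, Sum.inr t => u = extVert t
  | Sum.inr t, Sum.inl u => u = extVert t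
  | Sum.inr _, Sum.inr _ => False

/-- A fully packed loop configuration of size `n`: a subgraph of the grid with
external edges in which every grid vertex has degree `2` and which contains
exactly every other external edge, beginning with the topmost at the left side. -/
structure FPL (n : ℕ) where
  adj : FVert n → FVert n → Prop
  symm : ∀ u v, adj u v → adj v u
  sub : ∀ u v, adj u v → fullAdj u v
  degGrid : ∀ u : Fin n × Fin n, {v | adj (Sum.inl u) v}.ncard = 2
  degExtEven : ∀ t : Fin (4*n), t.val % 2 = 0 → {v | adj (Sum.inr t) v}.ncard = 1
  degExtOdd : ∀ t : Fin (4*n), t.val % 2 = 1 → {v | adj (Sum.inr t) v}.ncard = 0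

/-- `F` has link pattern `f` : the chosen external edges, numbered counterclockwise by
`Fin (2n)` (the `k`-th chosen one being the external edge at boundary position `2k`),
are matched in pairs by `f` according to connectivity in `F`. -/
def hasLinkPattern {n : ℕ} (F : FPL n) (f : Fin (2*n) → Fin (2*n)) : Prop :=
  ∀ k l : Fin (2*n), f k = l ↔ (k ≠ l ∧
    Relation.ReflTransGen F.adj
      (Sum.inr ⟨2*k.val, by have := k.isLt; omega⟩)
      (Sum.inr ⟨2*l.val, by have := l.isLt; omega⟩))

/-- `A_π`: the number of FPLs of size `n` with link pattern `π`. -/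
noncomputable def countFPL (n : ℕ) (f : Fin (2*n) → Fin (2*n)) : ℕ :=
  Nat.card {F : FPL n // hasLinkPattern F f}

/-! ### Wheel polynomials and the operators `S_k`, `D_k` -/

/-- The cyclic successor `k+1` on `Fin m`. -/
def cycS {m : ℕ} (i : Fin m) : Fin m := ⟨(i.val + 1) % m, Nat.mod_lt _ i.pos⟩

/-- `S_k`: the algebra automorphism exchanging the variables `z_k` and `z_{k+1}`
(cyclically, `z_{2n+1} := z_1`). -/
noncomputable def swapVar {F : Type*} [CommSemiring F] {N : ℕ} (k : Fin N)
    (f : MvPolynomial (Fin N) F) : MvPolynomial (Fin N) F :=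
  MvPolynomial.rename (Equiv.swap k (cycS k)) f

/-- `D` is the operator `D_k : f ↦ ((q z_k - q⁻¹ z_{k+1})/(z_{k+1} - z_k))·(S_k f - f)`,
characterized by `(z_{k+1} - z_k) · D f = (q z_k - q⁻¹ z_{k+1}) · (S_k f - f)`. -/
def IsDOp {F : Type*} [Field F] {N : ℕ} (q : F) (k : Fin N)
    (D : MvPolynomial (Fin N) F → MvPolynomial (Fin N) F) : Prop :=
  ∀ f, (X (cycS k) - X k) * D f = (C q * X k - C q⁻¹ * X (cycS k)) * (swapVar k f - f)

/-- A wheel polynomial of order `n`: homogeneous of degree `n(n-1)` and vanishing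
under every substitution `z_j := q² z_i`, `z_k := q⁴ z_i` with `i < j < k`. -/
def IsWheel {F : Type*} [Field F] (q : F) (n : ℕ) (p : MvPolynomial (Fin (2*n)) F) : Prop :=
  p.IsHomogeneous (n*(n-1)) ∧
  ∀ i j k : Fin (2*n), i < j → j < k →
    (MvPolynomial.aeval (fun t : Fin (2*n) =>
      if t = j then C (q^2) * X i else if t = k then C (q^4) * X i else X t)) p = 0

/-- The vector space `W_n[z]` of wheel polynomials of order `n`, as a submodule. -/
noncomputable def wheelSpace (F : Type*) [Field F] (q : F) (n : ℕ) :
    Submodule F (MvPolynomial (Fin (2*n)) F) :=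
  (homogeneousSubmodule (Fin (2*n)) F (n*(n-1))) ⊓
  ⨅ (i : Fin (2*n)) (j : Fin (2*n)) (k : Fin (2*n)) (_ : i < j) (_ : j < k),
    LinearMap.ker (MvPolynomial.aeval (R := F) (fun t : Fin (2*n) =>
      if t = j then C (q^2) * X i else if t = k then C (q^4) * X i else X t)).toLinearMap

/-- `Ψ_{()_n} = (q - q⁻¹)^{-n(n-1)} ∏_{1 ≤ i < j ≤ n} (q z_i - q⁻¹ z_j)(q z_{n+i} - q⁻¹ z_{n+j})`. -/
noncomputable def PsiEmpty {F : Type*} [Field F] (q : F) (n : ℕ) :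
    MvPolynomial (Fin (2*n)) F :=
  C (((q - q⁻¹)^(n*(n-1)))⁻¹) *
    ∏ ij ∈ Finset.univ.filter (fun ij : Fin n × Fin n => ij.1 < ij.2),
      ((C q * X ⟨ij.1.val, by have := ij.1.isLt; omega⟩ -
        C q⁻¹ * X ⟨ij.2.val, by have := ij.2.isLt; omega⟩) *
       (C q * X ⟨n + ij.1.val, by have := ij.1.isLt; omega⟩ -
        C q⁻¹ * X ⟨n + ij.2.val, by have := ij.2.isLt; omega⟩))

/-- The `Fin (2n)`-index of the operator `D_j` for the paper's (1-indexed, cyclic,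
`D_{j+2n} = D_j`) index `j`. -/
def finOfIdx (N : ℕ) (hN : 0 < N) (j : ℕ) : Fin N := ⟨(j - 1) % N, Nat.mod_lt _ hN⟩

/-- The list of `D`-operator indices for `D_π`: for each box of `λ(π)`, read row by row
from top to bottom and left to right within each row, the (0-indexed) index of the
diagonal `n + c - i` of that box. -/
def diagList1 (n : ℕ) (lam : ℕ → ℕ) : List (Fin (2*n)) :=
  (List.finRange n).flatMap fun i =>
    (List.range (lam i.val)).map fun c =>
      ⟨(n - 1 + c - i.val) % (2*n), Nat.mod_lt _ (by have := i.isLt; omega)⟩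

/-- The wheel polynomial `D_π`, obtained from `Ψ_{()_n}` by successively applying,
for each box of `λ(π)` read row by row from top to bottom and left to right,
the operator `D` indexed by the diagonal of that box. -/
noncomputable def DpiF {F : Type*} [Field F] (q : F) (n : ℕ)
    (D : Fin (2*n) → MvPolynomial (Fin (2*n)) F → MvPolynomial (Fin (2*n)) F)
    (f : Fin (2*n) → Fin (2*n)) : MvPolynomial (Fin (2*n)) F :=
  (diagList1 n (lamRowF n f)).foldl (fun p k => D k p) (PsiEmpty q n)

/-- Operator indices for the second stage of `D_{π₁,π₂}`: for each box of `λ(π₂)`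
(in reading order) the index of `D_{c-i}` (paper 1-indexed diagonal `c - i`, taken
mod `2n`). -/
def diagList2 (n rows : ℕ) (h : rows ≤ n) (lam : ℕ → ℕ) : List (Fin (2*n)) :=
  (List.finRange rows).flatMap fun i =>
    (List.range (lam i.val)).map fun c =>
      ⟨(((c : ℤ) - (i.val : ℤ) - 1) % ((2*n : ℕ) : ℤ)).toNat, by
        have hi := i.isLt
        have h2 : (0:ℤ) < ((2*n : ℕ) : ℤ) := by exact_mod_cast (show (0:ℕ) < 2*n by omega)
        have h3 := Int.emod_nonneg ((c : ℤ) - (i.val : ℤ) - 1) (ne_of_gt h2)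
        have h4 := Int.emod_lt_of_pos ((c : ℤ) - (i.val : ℤ) - 1) h2
        omega⟩

/-- The wheel polynomial `D_{π₁,π₂}` (with `π₁` of size `n₁`, `π₂` of size `n₂`):
starting from `D_{(π₁)_{n₂}}`, apply for each box of `λ(π₂)`, read row by row from top
to bottom and left to right, the operator `D` indexed (cyclically) by `c - i`. -/
noncomputable def DpiPair {F : Type*} [Field F] (q : F) (n1 n2 : ℕ)
    (D : Fin (2*(n1+n2)) → MvPolynomial (Fin (2*(n1+n2))) F → MvPolynomial (Fin (2*(n1+n2))) F)
    (f1 : Fin (2*n1) → Fin (2*n1)) (f2 : Fin (2*n2) → Fin (2*n2)) :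
    MvPolynomial (Fin (2*(n1+n2))) F :=
  (diagList2 (n1+n2) n2 (by omega) (lamRowF n2 f2)).foldl (fun p k => D k p)
    (DpiF q (n1+n2) D (nestF n1 n2 f1))

/-- `Psi` is the family `(Ψ_π)_{π ∈ NC_n}`: it starts with `Ψ_{()_n}` and satisfies the
recursion `Ψ_π = D_j(Ψ_σ) - Σ_{τ ∈ e_j⁻¹(σ), τ ∉ {σ,π}} Ψ_τ` whenever `σ ↗_j π`. -/
noncomputable def IsPsiFamily {F : Type*} [Field F] (q : F) (n : ℕ)
    (D : Fin (2*n) → MvPolynomial (Fin (2*n)) F → MvPolynomial (Fin (2*n)) F)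
    (Psi : NCM n → MvPolynomial (Fin (2*n)) F) : Prop :=
  Psi (nestedNC n) = PsiEmpty q n ∧
  ∀ (hn : 0 < n) (j : ℕ) (σ π : NCM n), UpArrow n σ.1 π.1 j →
    Psi π = D (finOfIdx (2*n) (by omega) j) (Psi σ) -
      ∑ τ : NCM n, if TLe (2*n) j τ.1 = σ.1 ∧ τ ≠ σ ∧ τ ≠ π then Psi τ else 0

/-! ### The polynomials `f(i,j)`, `g(i)`, `h(i)` and `P(α|β|γ)` -/

noncomputable def fP {F : Type*} [Field F] (q : F) {N : ℕ} (i j : Fin N) :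
    MvPolynomial (Fin N) F :=
  C (q - q⁻¹)⁻¹ * (C q * X i - C q⁻¹ * X j)

noncomputable def gP {F : Type*} [Field F] (q : F) {N : ℕ} (i : Fin N) :
    MvPolynomial (Fin N) F :=
  C (q - q⁻¹)⁻¹ * (C q - C q⁻¹ * X i)

noncomputable def hP {F : Type*} [Field F] (q : F) {N : ℕ} (i : Fin N) :
    MvPolynomial (Fin N) F :=
  C (q - q⁻¹)⁻¹ * (C q * X i - C q⁻¹)

noncomputable def Pabg {F : Type*} [Field F] (q : F) (n : ℕ)
    (α : Fin (2*n) → Fin (2*n) → ℕ) (β γ : Fin (2*n) → ℕ) :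
    MvPolynomial (Fin (2*n)) F :=
  (∏ i : Fin (2*n), ∏ j : Fin (2*n), if i ≠ j then fP q i j ^ α i j else 1) *
  ∏ i : Fin (2*n), (gP q i ^ β i * hP q i ^ γ i)

/-- The indeterminate `q` of `ℚ(q)`. -/
noncomputable def qQ : RatFunc ℚ := RatFunc.X

/-- `q = e^{2πi/3} ∈ ℂ`. -/
noncomputable def qC : ℂ := Complex.exp (2 * (Real.pi : ℂ) * Complex.I / 3)

/-! The Young diagram of a matching only depends on the set of left endpoints of its arches,
through their order statistics. The operator `e_j` changes only the arches through the points `j`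
and `j + 1`. Comparing the orientations of these two arches in `σ` (one combination would force
them to cross), the left endpoints of `π = e_j σ` are either those of `σ`, or arise from them by
moving one left endpoint to the right, which can only increase every order statistic and hence
gives `σ ≤ π`, or by moving the left endpoint `j + 1` to `j`, which removes exactly one box, on
diagonal `j`, so that `π ↗_j σ`. -/

open Finset

lemma Fin.val_le_val_of_strictMono {k m : ℕ} {e : Fin k → Fin m} (he : StrictMono e)
    (i : Fin k) : (i : ℕ) ≤ e i := by
  simpa using card_le_card_of_injOn e (s := Iio i) (t := Iio (e i))
    (fun _ hl => mem_Iio.2 (he (mem_Iio.1 hl))) he.injective.injOn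

namespace Finset

lemma eq_insert_erase_of_forall_mem_iff {α : Type*} [DecidableEq α] {s t : Finset α} {x y : α}
    (hxs : x ∈ s) (hxt : x ∉ t) (hys : y ∉ s) (hyt : y ∈ t)
    (h : ∀ i, i ≠ x → i ≠ y → (i ∈ t ↔ i ∈ s)) : t = insert y (s.erase x) := by
  ext i
  by_cases hix : i = x <;> by_cases hiy : i = y <;> simp_all

variable {α : Type*} [LinearOrder α]

lemma card_filter_lt_orderEmbOfFin_le {s : Finset α} {k : ℕ} (hs : #s = k) (i : Fin k) :
    #(s.filter (· < s.orderEmbOfFin hs i)) ≤ i := by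
  calc #(s.filter (· < s.orderEmbOfFin hs i))
      ≤ #((Iio i).image (s.orderEmbOfFin hs)) := by
        refine card_le_card fun a ha => ?_
        rw [mem_filter] at ha
        obtain ⟨l, rfl⟩ : a ∈ Set.range (s.orderEmbOfFin hs) := by
          rw [range_orderEmbOfFin]; exact ha.1
        exact mem_image_of_mem _ (mem_Iio.2 ((s.orderEmbOfFin hs).lt_iff_lt.1 ha.2))
    _ ≤ #(Iio i) := card_image_le
    _ = i := Fin.card_Iio i

lemma orderEmbOfFin_le_of_injOn {s t : Finset α} {k : ℕ} (hs : #s = k) (ht : #t = k)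
    {φ : α → α} (hmaps : Set.MapsTo φ t s) (hinj : Set.InjOn φ t) (hle : ∀ a ∈ t, φ a ≤ a)
    (i : Fin k) : s.orderEmbOfFin hs i ≤ t.orderEmbOfFin ht i := by
  by_contra! hlt
  have hcard : #(Iic i) ≤ #(s.filter (· < s.orderEmbOfFin hs i)) := by
    refine card_le_card_of_injOn (fun l => φ (t.orderEmbOfFin ht l)) (fun l hl => ?_) ?_
    · have hmem := t.orderEmbOfFin_mem ht l
      refine mem_filter.2 ⟨hmaps hmem, (hle _ hmem).trans_lt ?_⟩
      exact ((t.orderEmbOfFin ht).monotone (mem_Iic.1 hl)).trans_lt hlt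
    · exact hinj.comp (t.orderEmbOfFin ht).injective.injOn
        fun l _ => t.orderEmbOfFin_mem ht l
  have := card_filter_lt_orderEmbOfFin_le hs i
  rw [Fin.card_Iic] at hcard
  omega

lemma orderEmbOfFin_apply_of_covBy [DecidableEq α] {s t : Finset α} {k : ℕ} (hs : #s = k)
    (ht : #t = k) {x y : α} (hy : y ∉ s) (hyx : y ⋖ x)
    (hts : t = insert y (s.erase x)) (i : Fin k) :
    t.orderEmbOfFin ht i = if s.orderEmbOfFin hs i = x then y else s.orderEmbOfFin hs i := by
  set e := s.orderEmbOfFin hs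
  have hmem : ∀ l, (if e l = x then y else e l) ∈ t := fun l => by
    split_ifs with h
    · exact hts ▸ mem_insert_self y _
    · exact hts ▸ mem_insert_of_mem (mem_erase.2 ⟨h, s.orderEmbOfFin_mem hs l⟩)
  have hne : ∀ l, e l ≠ y := fun l h => hy (h ▸ s.orderEmbOfFin_mem hs l)
  refine (congrFun (orderEmbOfFin_unique ht hmem fun l l' hll' => ?_) i).symm
  have hlt := e.strictMono hll'
  split_ifs with h h' h'
  · exact absurd (h.trans h'.symm) (e.injective.ne hll'.ne)
  · exact hyx.lt.trans (h ▸ hlt)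
  · exact (hyx.le_of_lt (h' ▸ hlt)).lt_of_ne (hne l)
  · exact hlt

end Finset

def leftEnds {m : ℕ} (f : Fin m → Fin m) : Finset (Fin m) :=
  univ.filter fun i => i < f i

lemma mem_leftEnds {m : ℕ} {f : Fin m → Fin m} {i : Fin m} : i ∈ leftEnds f ↔ i < f i := by
  simp [leftEnds]

lemma two_mul_card_leftEnds {m : ℕ} {f : Fin m → Fin m} (hinv : Function.Involutive f)
    (hfix : ∀ i, f i ≠ i) : 2 * #(leftEnds f) = m := by
  have hright : #(leftEnds f) = #(univ.filter fun i => ¬ i < f i) := by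
    refine card_nbij' f f (fun i hi => ?_) (fun i hi => ?_) (fun i _ => hinv i) (fun i _ => hinv i)
    · rw [mem_coe, mem_leftEnds] at hi
      simpa [hinv i] using hi.le
    · simp only [coe_filter, mem_univ, true_and, not_lt, Set.mem_ofPred_eq] at hi
      rw [mem_coe, mem_leftEnds, hinv]
      exact hi.lt_of_ne (hfix i)
  have := card_filter_add_card_filter_not (s := univ) (fun i => i < f i)
  rw [card_univ, Fintype.card_fin] at this
  rw [leftEnds] at hright ⊢
  omega

section YoungDiagram

variable {n : ℕ} {f g : Fin (2 * n) → Fin (2 * n)}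

lemma lamRowF_eq (hf : #(leftEnds f) = n) {i : ℕ} (hi : i < n) :
    lamRowF n f i =
      ((leftEnds f).orderEmbOfFin hf ⟨n - 1 - i, by omega⟩ : ℕ) - (n - 1 - i) := by
  rw [lamRowF, if_pos hi, List.getD_eq_getElem _ _ (by simp [leftEnds] at hf ⊢; omega),
    List.getElem_map, orderEmbOfFin_apply]
  rfl

lemma lamRowF_of_le {i : ℕ} (hi : n ≤ i) : lamRowF n f i = 0 :=
  if_neg hi.not_gt

lemma card_leftEnds_of_eq_insert_erase (hf : #(leftEnds f) = n) {x y : Fin (2 * n)}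
    (hx : x ∈ leftEnds f) (hy : y ∉ leftEnds f)
    (hg : leftEnds g = insert y ((leftEnds f).erase x)) : #(leftEnds g) = n := by
  have := card_pos.2 ⟨x, hx⟩
  rw [hg, card_insert_of_notMem fun h => hy (mem_of_mem_erase h), card_erase_of_mem hx]
  omega

lemma lamLe_of_leftEnds_eq_insert_erase (hf : #(leftEnds f) = n) {x y : Fin (2 * n)}
    (hx : x ∈ leftEnds f) (hy : y ∉ leftEnds f) (hxy : x < y)
    (hg : leftEnds g = insert y ((leftEnds f).erase x)) : LamLe n f g := by
  have hg' := card_leftEnds_of_eq_insert_erase hf hx hy hg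
  intro i
  rcases lt_or_ge i n with hi | hi
  · rw [lamRowF_eq hf hi, lamRowF_eq hg' hi]
    refine Nat.sub_le_sub_right (orderEmbOfFin_le_of_injOn hf hg'
      (φ := fun a => if a = y then x else a) (fun a ha => ?_) (fun a ha b hb hab => ?_)
      (fun a _ => ?_) _) _
    · rw [mem_coe, hg, mem_insert, mem_erase] at ha
      dsimp only
      split_ifs with h
      exacts [hx, ha.resolve_left h |>.2]
    · rw [mem_coe, hg, mem_insert, mem_erase] at ha hb
      beta_reduce at hab
      split_ifs at hab with h h' h' <;> grind
    · split_ifs with h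
      exacts [h ▸ hxy.le, le_rfl]
  · rw [lamRowF_of_le hi, lamRowF_of_le hi]

lemma upArrow_of_leftEnds_eq_insert_erase (hf : #(leftEnds f) = n) {x y : Fin (2 * n)}
    (hx : x ∈ leftEnds f) (hy : y ∉ leftEnds f) (hyx : y ⋖ x)
    (hg : leftEnds g = insert y ((leftEnds f).erase x)) : UpArrow n g f x := by
  have hg' := card_leftEnds_of_eq_insert_erase hf hx hy hg
  set e := (leftEnds f).orderEmbOfFin hf
  set e' := (leftEnds g).orderEmbOfFin hg'
  have he' : ∀ k, e' k = if e k = x then y else e k :=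
    orderEmbOfFin_apply_of_covBy hf hg' hy hyx hg
  obtain ⟨k, hk⟩ : ∃ k, e k = x := by
    rw [← Set.mem_range, range_orderEmbOfFin]; exact hx
  have hky : (k : ℕ) ≤ y := by
    simpa [he', hk] using Fin.val_le_val_of_strictMono e'.strictMono k
  have hyx' : (y : ℕ) + 1 = x := Nat.covBy_iff_add_one_eq.1 (Fin.covBy_iff.1 hyx)
  have hk' : (⟨n - 1 - (n - 1 - k), by omega⟩ : Fin n) = k := Fin.ext (by dsimp only; omega)
  refine ⟨n - 1 - k, by omega, ?_, fun i hi => ?_, ?_⟩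
  · rw [lamRowF_eq hf (by omega), lamRowF_eq hg' (by omega), hk', he', if_pos hk, hk]
    omega
  · rcases lt_or_ge i n with hin | hin
    · rw [lamRowF_eq hf hin, lamRowF_eq hg' hin, he', if_neg]
      exact hk ▸ e.injective.ne (Fin.ne_of_val_ne (by dsimp only; omega))
    · rw [lamRowF_of_le hin, lamRowF_of_le hin]
  · rw [lamRowF_eq hg' (by omega), hk', he', if_pos hk]
    omega

end YoungDiagram

section TemperleyLieb

variable {m j : ℕ} {f : Fin m → Fin m} {a b : Fin m}

lemma covBy_of_val_add_one_eq (ha : (a : ℕ) + 1 = j) (hb : (b : ℕ) = j) : a ⋖ b :=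
  Fin.covBy_iff.2 (Nat.covBy_iff_add_one_eq.2 (ha.trans hb.symm))

lemma TLe_apply (ha : (a : ℕ) + 1 = j) (hb : (b : ℕ) = j) (i : Fin m) :
    TLe m j f i = if i = a then b else if i = b then a
      else if f i = a then f b else if f i = b then f a else f i := by
  have ha' : (⟨(j - 1) % m, Nat.mod_lt _ i.pos⟩ : Fin m) = a :=
    Fin.ext (Nat.mod_eq_of_lt (by omega) |>.trans (by omega))
  have hb' : (⟨j % m, Nat.mod_lt _ i.pos⟩ : Fin m) = b :=
    Fin.ext (Nat.mod_eq_of_lt (by omega) |>.trans (by omega))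
  simp only [TLe, ha', hb']

lemma TLe_apply_left (ha : (a : ℕ) + 1 = j) (hb : (b : ℕ) = j) : TLe m j f a = b := by
  simp [TLe_apply ha hb]

lemma TLe_apply_right (ha : (a : ℕ) + 1 = j) (hb : (b : ℕ) = j) : TLe m j f b = a := by
  have : b ≠ a := Fin.ne_of_val_ne (by omega)
  simp [TLe_apply ha hb, this]

lemma TLe_apply_apply_left (ha : (a : ℕ) + 1 = j) (hb : (b : ℕ) = j)
    (hinv : Function.Involutive f) (hfix : ∀ i, f i ≠ i) (hab : f a ≠ b) :
    TLe m j f (f a) = f b := by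
  simp [TLe_apply ha hb, hfix a, hab, hinv a]

lemma TLe_apply_apply_right (ha : (a : ℕ) + 1 = j) (hb : (b : ℕ) = j)
    (hinv : Function.Involutive f) (hfix : ∀ i, f i ≠ i) (hab : f a ≠ b) :
    TLe m j f (f b) = f a := by
  have hba : f b ≠ a := fun h => hab (h ▸ hinv b)
  have : b ≠ a := Fin.ne_of_val_ne (by omega)
  simp [TLe_apply ha hb, hfix b, hba, hinv b, this]

lemma TLe_apply_of_ne (ha : (a : ℕ) + 1 = j) (hb : (b : ℕ) = j)
    (hinv : Function.Involutive f) {i : Fin m} (hia : i ≠ a) (hib : i ≠ b) (hifa : i ≠ f a)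
    (hifb : i ≠ f b) : TLe m j f i = f i := by
  have hfia : f i ≠ a := fun h => hifa (h ▸ (hinv i).symm)
  have hfib : f i ≠ b := fun h => hifb (h ▸ (hinv i).symm)
  simp [TLe_apply ha hb, hia, hib, hfia, hfib]

lemma TLe_eq_self (ha : (a : ℕ) + 1 = j) (hb : (b : ℕ) = j) (hinv : Function.Involutive f)
    (hab : f a = b) : TLe m j f = f := by
  have hba : f b = a := hab ▸ hinv a
  funext i
  by_cases hia : i = a
  · rw [hia, TLe_apply_left ha hb, hab]
  by_cases hib : i = b
  · rw [hib, TLe_apply_right ha hb, hba]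
  exact TLe_apply_of_ne ha hb hinv hia hib (hab ▸ hib) (hba ▸ hia)

end TemperleyLieb

section Arches

variable {n j : ℕ} {σ : Fin (2 * n) → Fin (2 * n)} {a b : Fin (2 * n)}

lemma leftEnds_TLe_of_lt_of_lt (hσ : IsNCMatching n σ) (ha : (a : ℕ) + 1 = j)
    (hb : (b : ℕ) = j) (hσa : σ a < a) (hσb : σ b < b) :
    leftEnds (TLe (2 * n) j σ) = insert a ((leftEnds σ).erase (σ a)) := by
  obtain ⟨hinv, hfix, hncr⟩ := hσ
  have hab := covBy_of_val_add_one_eq ha hb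
  have hσab : σ a ≠ b := (hσa.trans hab.lt).ne
  have hnest : σ b < σ a := by
    refine lt_of_not_ge fun h => hncr (σ a) (σ b) (h.lt_of_ne ?_) ?_ ?_
    · exact (Function.Involutive.injective hinv).ne hab.lt.ne
    · rw [hinv]
      exact (hab.le_of_lt hσb).lt_of_ne fun h => hσab (h ▸ hinv b)
    · rw [hinv, hinv]; exact hab.lt
  refine eq_insert_erase_of_forall_mem_iff (mem_leftEnds.2 (by rwa [hinv])) ?_
    (mem_leftEnds.not.2 hσa.not_gt) (mem_leftEnds.2 ?_) fun i hiσa hia => ?_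
  · rw [mem_leftEnds, TLe_apply_apply_left ha hb hinv hfix hσab]
    exact hnest.not_gt
  · rw [TLe_apply_left ha hb]; exact hab.lt
  · by_cases hib : i = b
    · simp only [hib, mem_leftEnds, TLe_apply_right ha hb, hab.lt.not_gt, hσb.not_gt]
    by_cases hiσb : i = σ b
    · simp only [hiσb, mem_leftEnds, TLe_apply_apply_right ha hb hinv hfix hσab, hinv, hnest,
        hσb]
    rw [mem_leftEnds, mem_leftEnds, TLe_apply_of_ne ha hb hinv hia hib hiσa hiσb]

lemma leftEnds_TLe_of_lt_of_gt (hσ : IsNCMatching n σ) (ha : (a : ℕ) + 1 = j)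
    (hb : (b : ℕ) = j) (hσa : σ a < a) (hσb : b < σ b) :
    leftEnds (TLe (2 * n) j σ) = insert a ((leftEnds σ).erase b) := by
  obtain ⟨hinv, hfix, -⟩ := hσ
  have hab := covBy_of_val_add_one_eq ha hb
  have hσab : σ a ≠ b := (hσa.trans hab.lt).ne
  refine eq_insert_erase_of_forall_mem_iff (mem_leftEnds.2 hσb) ?_
    (mem_leftEnds.not.2 hσa.not_gt) (mem_leftEnds.2 ?_) fun i hib hia => ?_
  · rw [mem_leftEnds, TLe_apply_right ha hb]; exact hab.lt.not_gt
  · rw [TLe_apply_left ha hb]; exact hab.lt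
  · by_cases hiσa : i = σ a
    · simp only [hiσa, mem_leftEnds, TLe_apply_apply_left ha hb hinv hfix hσab, hinv, hσa,
        ((hσa.trans hab.lt).trans hσb)]
    by_cases hiσb : i = σ b
    · simp only [hiσb, mem_leftEnds, TLe_apply_apply_right ha hb hinv hfix hσab, hinv,
        ((hσa.trans hab.lt).trans hσb).not_gt, hσb.not_gt]
    rw [mem_leftEnds, mem_leftEnds, TLe_apply_of_ne ha hb hinv hia hib hiσa hiσb]

lemma leftEnds_TLe_of_gt_of_gt (hσ : IsNCMatching n σ) (ha : (a : ℕ) + 1 = j)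
    (hb : (b : ℕ) = j) (hσa : a < σ a) (hσb : b < σ b) :
    leftEnds (TLe (2 * n) j σ) = insert (σ b) ((leftEnds σ).erase b) := by
  obtain ⟨hinv, hfix, hncr⟩ := hσ
  have hab := covBy_of_val_add_one_eq ha hb
  have hσab : σ a ≠ b := fun h => hab.lt.not_gt (hσb.trans_eq (by rw [← h, hinv]))
  have hbσa : b < σ a := (hab.ge_of_gt hσa).lt_of_ne' hσab
  have hnest : σ b < σ a := lt_of_not_ge fun h =>
    hncr a b hab.lt hbσa (h.lt_of_ne ((Function.Involutive.injective hinv).ne hab.lt.ne))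
  refine eq_insert_erase_of_forall_mem_iff (mem_leftEnds.2 hσb) ?_
    (mem_leftEnds.not.2 (by rw [hinv]; exact hσb.not_gt)) (mem_leftEnds.2 ?_) fun i hib hiσb => ?_
  · rw [mem_leftEnds, TLe_apply_right ha hb]; exact hab.lt.not_gt
  · rw [TLe_apply_apply_right ha hb hinv hfix hσab]; exact hnest
  · by_cases hia : i = a
    · simp only [hia, mem_leftEnds, TLe_apply_left ha hb, hab.lt, hσa]
    by_cases hiσa : i = σ a
    · simp only [hiσa, mem_leftEnds, TLe_apply_apply_left ha hb hinv hfix hσab, hinv,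
        hnest.not_gt, hσa.not_gt]
    rw [mem_leftEnds, mem_leftEnds, TLe_apply_of_ne ha hb hinv hia hib hiσa hiσb]

lemma lt_apply_of_lt_apply_of_covBy (hσ : IsNCMatching n σ) (hab : a ⋖ b) (hσab : σ a ≠ b)
    (hσa : a < σ a) : b < σ b := by
  obtain ⟨hinv, hfix, hncr⟩ := hσ
  refine lt_of_not_ge fun h => hncr (σ b) a ?_ (by rw [hinv]; exact hab.lt) ?_
  · exact (hab.le_of_lt (h.lt_of_ne (hfix b))).lt_of_ne fun h' => hσab (h' ▸ hinv b)
  · rw [hinv]; exact (hab.ge_of_gt hσa).lt_of_ne' hσab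

end Arches

theorem stmt2 (n : ℕ) (j : ℕ) (hj1 : 2 ≤ j) (hj2 : j ≤ 2*n - 2)
    (π σ : NCM n) (h : TLe (2*n) j σ.1 = π.1) :
    UpArrow n π.1 σ.1 j ∨ LamLe n σ.1 π.1 := by
  rw [← h]
  have hσ : IsNCMatching n σ.1 := σ.2
  obtain ⟨hinv, hfix, -⟩ := id hσ
  have hcard : #(leftEnds σ.1) = n := by
    have := two_mul_card_leftEnds hinv hfix; omega
  set a : Fin (2 * n) := ⟨j - 1, by omega⟩
  set b : Fin (2 * n) := ⟨j, by omega⟩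
  have ha : (a : ℕ) + 1 = j := by simp only [a]; omega
  have hb : (b : ℕ) = j := rfl
  have hab := covBy_of_val_add_one_eq ha hb
  by_cases hσab : σ.1 a = b
  · rw [TLe_eq_self ha hb hinv hσab]
    exact Or.inr fun _ => le_rfl
  rcases (hfix a).lt_or_gt with hσa | hσa
  · rcases (hfix b).lt_or_gt with hσb | hσb
    · exact Or.inr <| lamLe_of_leftEnds_eq_insert_erase hcard (mem_leftEnds.2 (by rwa [hinv]))
        (mem_leftEnds.not.2 hσa.not_gt) hσa (leftEnds_TLe_of_lt_of_lt hσ ha hb hσa hσb)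
    · exact Or.inl <| upArrow_of_leftEnds_eq_insert_erase hcard (mem_leftEnds.2 hσb)
        (mem_leftEnds.not.2 hσa.not_gt) hab (leftEnds_TLe_of_lt_of_gt hσ ha hb hσa hσb)
  · have hσb := lt_apply_of_lt_apply_of_covBy hσ hab hσab hσa
    exact Or.inr <| lamLe_of_leftEnds_eq_insert_erase hcard (mem_leftEnds.2 hσb)
      (mem_leftEnds.not.2 (by rw [hinv]; exact hσb.not_gt)) hσb
      (leftEnds_TLe_of_gt_of_gt hσ ha hb hσa hσb)
end

section
/- For every 1 ≤ k ≤ 2n−1, the operator D_k maps the space W_n[z] of wheel polynomials of order n into itself. Moreover, over ℂ with q = e^{2πi/3}, the operator D_{2n} (defined with z_{2n+1} := z_1) also maps the space of wheel polynomials of order n into itself. -/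
attribute [local instance] Classical.propDecidable

open MvPolynomial

/-! ### Auxiliary lemmas for the proof -/

section WheelAux

lemma aux_ne_zero {F : Type*} [Field F] {N : ℕ} (c1 c2 : F) (a b : Fin N)
    (h1 : c1 ≠ 0) (h : c1 ≠ c2 ∨ a ≠ b) :
    (C c1 * X a - C c2 * X b : MvPolynomial (Fin N) F) ≠ 0 := by
  intro h0
  rcases eq_or_ne a b with rfl | hab
  · have hc : c1 ≠ c2 := h.resolve_right (fun hh => hh rfl)
    have h2 := congrArg (eval (fun _ : Fin N => (1 : F))) h0
    simp at h2
    exact hc (by linear_combination h2)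
  · have h2 := congrArg (eval (fun t : Fin N => if t = a then (1 : F) else 0)) h0
    simp [hab, Ne.symm hab] at h2
    exact h1 h2

lemma aux_homog_cancel {F : Type*} [Field F] {N : ℕ} {d : ℕ}
    {w h : MvPolynomial (Fin N) F}
    (hw : w.IsHomogeneous 1) (hw0 : w ≠ 0) (hwh : (w * h).IsHomogeneous (d + 1)) :
    h.IsHomogeneous d := by
  classical
  have key : ∀ i : ℕ, i ≠ d → homogeneousComponent i h = 0 := by
    intro i hi
    by_cases hle : i ≤ h.totalDegree
    · have hsum : w * h = ∑ j ∈ Finset.range (h.totalDegree + 1),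
          w * homogeneousComponent j h := by
        rw [← Finset.mul_sum, sum_homogeneousComponent]
      have hj : ∀ j, homogeneousComponent (i + 1) (w * homogeneousComponent j h)
          = if i + 1 = 1 + j then w * homogeneousComponent j h else 0 := fun j =>
        homogeneousComponent_of_mem
          ((mem_homogeneousSubmodule _ _).2
            (hw.mul (homogeneousComponent_isHomogeneous j h)))
      have hcomp : homogeneousComponent (i + 1) (w * h) = w * homogeneousComponent i h := by
        rw [hsum, map_sum]
        rw [Finset.sum_eq_single i]
        · rw [hj i, if_pos (by omega)]
        · intro j _ hji
          rw [hj j, if_neg (by omega)]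
        · intro hmem
          exact absurd (Finset.mem_range.2 (by omega)) hmem
      have hzero : homogeneousComponent (i + 1) (w * h) = 0 := by
        rw [homogeneousComponent_of_mem (p := w * h) (m := i + 1) (n := d + 1)
          ((mem_homogeneousSubmodule _ _).2 hwh), if_neg (by omega)]
      rw [hzero] at hcomp
      rcases mul_eq_zero.mp hcomp.symm with h1 | h1
      · exact absurd h1 hw0
      · exact h1
    · exact homogeneousComponent_eq_zero _ _ (by omega)
  have hh : h = homogeneousComponent d h := by
    conv_lhs => rw [← sum_homogeneousComponent h]
    rw [Finset.sum_eq_single d (fun j _ hj => key j hj)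
      (fun hd => homogeneousComponent_eq_zero _ _ (by
        simp only [Finset.mem_range, not_lt] at hd; omega))]
  have h2 := homogeneousComponent_isHomogeneous d h
  rwa [← hh] at h2

/-- The wheel substitution map for the triple `(i, j, l)`. -/
noncomputable def wsub {F : Type*} [Field F] {N : ℕ} (q : F) (i j l : Fin N) :
    Fin N → MvPolynomial (Fin N) F :=
  fun t => if t = j then C (q ^ 2) * X i else if t = l then C (q ^ 4) * X i else X t

lemma aux_vanish_via {F : Type*} [Field F] {N : ℕ}
    (G : Fin N → MvPolynomial (Fin N) F)
    (Φ : MvPolynomial (Fin N) F →ₐ[F] MvPolynomial (Fin N) F)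
    (g' : Fin N → MvPolynomial (Fin N) F)
    (hgg : ∀ t, G t = Φ (g' t)) (p : MvPolynomial (Fin N) F)
    (hp : aeval g' p = 0) : aeval G p = 0 := by
  have hG : G = fun t => Φ (g' t) := funext hgg
  rw [hG, ← comp_aeval_apply, hp, map_zero]

lemma aux_swap_eq {F : Type*} [Field F] {N : ℕ} (q : F) (σ : Equiv.Perm (Fin N))
    (hσ : ∀ t, σ (σ t) = t) (i j l : Fin N) (hjl : j ≠ l) (t : Fin N) :
    wsub q i j l (σ t) =
      (aeval (fun s => (X (σ s) : MvPolynomial (Fin N) F)))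
        (wsub q (σ i) (σ j) (σ l) t) := by
  unfold wsub
  by_cases h1 : t = σ j
  · have hh : σ t = j := by rw [h1, hσ]
    simp [h1, hh, hσ]
  · have h1' : σ t ≠ j := fun hh => h1 (by rw [← hh, hσ])
    by_cases h2 : t = σ l
    · have hh : σ t = l := by rw [h2, hσ]
      simp [h1, h1', h2, hh, hσ, Ne.symm hjl]
    · have h2' : σ t ≠ l := fun hh => h2 (by rw [← hh, hσ])
      simp [h1, h1', h2, h2']

lemma aux_good {F : Type*} [Field F] {N : ℕ} (q : F) (p : MvPolynomial (Fin N) F)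
    (Hvan : ∀ a b c : Fin N, a < b → b < c → aeval (wsub q a b c) p = 0)
    (m s i j l : Fin N) (hjl : j ≠ l)
    (h1 : Equiv.swap m s i < Equiv.swap m s j)
    (h2 : Equiv.swap m s j < Equiv.swap m s l) :
    aeval (wsub q i j l ∘ (Equiv.swap m s)) p = 0 :=
  aux_vanish_via _ (aeval (fun t => (X ((Equiv.swap m s) t) : MvPolynomial (Fin N) F)))
    (wsub q (Equiv.swap m s i) (Equiv.swap m s j) (Equiv.swap m s l))
    (fun t => aux_swap_eq q _ (fun t => Equiv.swap_apply_self m s t) i j l hjl t) p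
    (Hvan _ _ _ h1 h2)

lemma aux_gdiff_ne {F : Type*} [Field F] {N : ℕ} (q : F) (hq0 : q ≠ 0) (hq2 : q ^ 2 ≠ 1)
    (hq4 : q ^ 4 ≠ 1) (hq24 : q ^ 2 ≠ q ^ 4) (i j l m s : Fin N) (hms : m ≠ s)
    (hij : i < j) (hjl : j < l) :
    wsub q i j l s - wsub q i j l m ≠ 0 := by
  have hX : ∀ a : Fin N, (X a : MvPolynomial (Fin N) F) = C 1 * X a := by
    intro a; rw [C_1, one_mul]
  unfold wsub
  split_ifs with h1 h2 h3 h4 h5 h6 h7 h8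
  · exact absurd (h2.trans h1.symm) hms
  · exact aux_ne_zero _ _ i i (pow_ne_zero 2 hq0) (Or.inl hq24)
  · rw [hX m]; exact aux_ne_zero _ _ i m (pow_ne_zero 2 hq0) (Or.inl hq2)
  · exact aux_ne_zero _ _ i i (pow_ne_zero 4 hq0) (Or.inl (Ne.symm hq24))
  · exact absurd (h6.trans h4.symm) hms
  · rw [hX m]; exact aux_ne_zero _ _ i m (pow_ne_zero 4 hq0) (Or.inl hq4)
  · rw [hX s]; exact aux_ne_zero _ _ s i one_ne_zero (Or.inl (fun hh => hq2 hh.symm))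
  · rw [hX s]; exact aux_ne_zero _ _ s i one_ne_zero (Or.inl (fun hh => hq4 hh.symm))
  · rw [hX s, hX m]; exact aux_ne_zero _ _ s m one_ne_zero (Or.inr (Ne.symm hms))

lemma aux_u_zero {F : Type*} [Field F] {N : ℕ} (q c1 c2 : F) (a : Fin N)
    (h : q * c1 = q⁻¹ * c2) :
    (C q * (C c1 * X a) - C q⁻¹ * (C c2 * X a) : MvPolynomial (Fin N) F) = 0 := by
  rw [← mul_assoc, ← mul_assoc, ← C_mul, ← C_mul, h, sub_self]

lemma aux_homog_D {F : Type*} [Field F] {N : ℕ} (q : F) (m : Fin N)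
    (hms : m ≠ cycS m)
    (D : MvPolynomial (Fin N) F → MvPolynomial (Fin N) F) (hD : IsDOp q m D)
    {d : ℕ} (p : MvPolynomial (Fin N) F) (hp : p.IsHomogeneous d) :
    (D p).IsHomogeneous d := by
  have hw : (X (cycS m) - X m : MvPolynomial (Fin N) F).IsHomogeneous 1 :=
    (isHomogeneous_X _ _).sub (isHomogeneous_X _ _)
  have hw0 : (X (cycS m) - X m : MvPolynomial (Fin N) F) ≠ 0 := by
    have he : (X (cycS m) - X m : MvPolynomial (Fin N) F)
        = C 1 * X (cycS m) - C 1 * X m := by rw [C_1, one_mul, one_mul]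
    rw [he]
    exact aux_ne_zero _ _ _ _ one_ne_zero (Or.inr (Ne.symm hms))
  apply aux_homog_cancel hw hw0
  rw [hD p]
  have hu : (C q * X m - C q⁻¹ * X (cycS m) : MvPolynomial (Fin N) F).IsHomogeneous 1 :=
    (isHomogeneous_C_mul_X q m).sub (isHomogeneous_C_mul_X q⁻¹ (cycS m))
  have hsp : (swapVar m p - p).IsHomogeneous d :=
    (hp.rename_isHomogeneous).sub hp
  simpa [add_comm] using hu.mul hsp

lemma aux_swap_val {N : ℕ} (m s x : Fin N) :
    ((Equiv.swap m s) x).val =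
      if x.val = m.val then s.val else if x.val = s.val then m.val else x.val := by
  rw [Equiv.swap_apply_def]
  split_ifs <;> simp_all [Fin.ext_iff]

lemma aux_partLin {F : Type*} [Field F] (q : F) (hq0 : q ≠ 0) (hq2 : q ^ 2 ≠ 1)
    (hq4 : q ^ 4 ≠ 1) (hq24 : q ^ 2 ≠ q ^ 4) (n : ℕ) (hn : 0 < n) (m : Fin (2 * n))
    (hm : m.val + 1 < 2 * n)
    (D : MvPolynomial (Fin (2 * n)) F → MvPolynomial (Fin (2 * n)) F)
    (hD : IsDOp q m D) (p : MvPolynomial (Fin (2 * n)) F) (hp : IsWheel q n p) :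
    IsWheel q n (D p) := by
  have hsv : (cycS m).val = m.val + 1 := by
    simp [cycS, Nat.mod_eq_of_lt hm]
  have hms : m ≠ cycS m := fun h => by
    have := congrArg Fin.val h; omega
  refine ⟨aux_homog_D q m hms D hD p hp.1, ?_⟩
  intro i j l hij hjl
  show aeval (wsub q i j l) (D p) = 0
  have Hvan : ∀ a b c : Fin (2 * n), a < b → b < c → aeval (wsub q a b c) p = 0 :=
    fun a b c h1 h2 => hp.2 a b c h1 h2
  have heq := congrArg (aeval (wsub q i j l)) (hD p)
  simp only [map_mul, map_sub, aeval_X, aeval_C, algebraMap_eq] at heq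
  rw [Hvan i j l hij hjl, sub_zero] at heq
  have hsw : aeval (wsub q i j l) (swapVar m p)
      = aeval (wsub q i j l ∘ (Equiv.swap m (cycS m))) p := by
    unfold swapVar; rw [aeval_rename]
  rw [hsw] at heq
  have hAne : wsub q i j l (cycS m) - wsub q i j l m ≠ 0 :=
    aux_gdiff_ne q hq0 hq2 hq4 hq24 i j l m (cycS m) hms hij hjl
  suffices hRHS : (C q * wsub q i j l m - C q⁻¹ * wsub q i j l (cycS m)) *
      (aeval (wsub q i j l ∘ (Equiv.swap m (cycS m))) p) = 0 by
    exact (mul_eq_zero.mp (heq.trans hRHS)).resolve_left hAne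
  by_cases hb1 : m = i ∧ cycS m = j
  · rcases hb1 with ⟨rfl, rfl⟩
    have e1 : wsub q m (cycS m) l m = X m := by
      unfold wsub
      rw [if_neg hms, if_neg (ne_of_lt (hij.trans hjl))]
    have e2 : wsub q m (cycS m) l (cycS m) = C (q ^ 2) * X m := by
      unfold wsub; rw [if_pos rfl]
    rw [e1, e2]
    nth_rewrite 1 [show (X m : MvPolynomial (Fin (2 * n)) F) = C 1 * X m from by
      rw [C_1, one_mul]]
    rw [aux_u_zero q 1 (q ^ 2) m (by field_simp; try ring), zero_mul]
  · by_cases hb2 : m = j ∧ cycS m = l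
    · rcases hb2 with ⟨rfl, rfl⟩
      have e1 : wsub q i m (cycS m) m = C (q ^ 2) * X i := by
        unfold wsub; rw [if_pos rfl]
      have e2 : wsub q i m (cycS m) (cycS m) = C (q ^ 4) * X i := by
        unfold wsub; rw [if_neg (Ne.symm hms), if_pos rfl]
      rw [e1, e2, aux_u_zero q (q ^ 2) (q ^ 4) i (by field_simp; try ring), zero_mul]
    · have hb1' : ¬(m.val = i.val ∧ (cycS m).val = j.val) := by
        simpa [Fin.ext_iff] using hb1
      have hb2' : ¬(m.val = j.val ∧ (cycS m).val = l.val) := by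
        simpa [Fin.ext_iff] using hb2
      have hij' : i.val < j.val := hij
      have hjl' : j.val < l.val := hjl
      have ho1 : Equiv.swap m (cycS m) i < Equiv.swap m (cycS m) j := by
        rw [Fin.lt_def, aux_swap_val, aux_swap_val]
        split_ifs <;> omega
      have ho2 : Equiv.swap m (cycS m) j < Equiv.swap m (cycS m) l := by
        rw [Fin.lt_def, aux_swap_val, aux_swap_val]
        split_ifs <;> omega
      rw [aux_good q p Hvan m (cycS m) i j l (ne_of_lt hjl) ho1 ho2, mul_zero]

lemma aux_partCyc {F : Type*} [Field F] (q : F) (hq0 : q ≠ 0) (hq3 : q ^ 3 = 1)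
    (hq1 : q ≠ 1) (n : ℕ) (hn : 0 < n) (m : Fin (2 * n)) (hmv : m.val = 2 * n - 1)
    (D : MvPolynomial (Fin (2 * n)) F → MvPolynomial (Fin (2 * n)) F)
    (hD : IsDOp q m D) (p : MvPolynomial (Fin (2 * n)) F) (hp : IsWheel q n p) :
    IsWheel q n (D p) := by
  have hq6 : q ^ 6 = 1 := by
    rw [show (6 : ℕ) = 3 * 2 from rfl, pow_mul, hq3, one_pow]
  have hq2 : q ^ 2 ≠ 1 := by
    intro h
    apply hq1
    have h3 := hq3
    rw [show q ^ 3 = q * q ^ 2 from by ring, h, mul_one] at h3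
    exact h3
  have hq4e : q ^ 4 = q := by
    rw [show q ^ 4 = q * q ^ 3 from by ring, hq3, mul_one]
  have hq4 : q ^ 4 ≠ 1 := by rw [hq4e]; exact hq1
  have hq24 : q ^ 2 ≠ q ^ 4 := by
    rw [hq4e]
    intro h
    apply hq1
    have := mul_left_cancel₀ hq0 (show q * q = q * 1 from by rw [mul_one]; linear_combination h)
    exact this
  have hinv : q⁻¹ = q ^ 5 :=
    inv_eq_of_mul_eq_one_right (by linear_combination hq6)
  have hsv : (cycS m).val = 0 := by
    show (m.val + 1) % (2 * n) = 0
    rw [hmv, show 2 * n - 1 + 1 = 2 * n from by omega, Nat.mod_self]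
  have hms : m ≠ cycS m := fun h => by
    have := congrArg Fin.val h
    omega
  refine ⟨aux_homog_D q m hms D hD p hp.1, ?_⟩
  intro i j l hij hjl
  show aeval (wsub q i j l) (D p) = 0
  have Hvan : ∀ a b c : Fin (2 * n), a < b → b < c → aeval (wsub q a b c) p = 0 :=
    fun a b c h1 h2 => hp.2 a b c h1 h2
  have heq := congrArg (aeval (wsub q i j l)) (hD p)
  simp only [map_mul, map_sub, aeval_X, aeval_C, algebraMap_eq] at heq
  rw [Hvan i j l hij hjl, sub_zero] at heq
  have hsw : aeval (wsub q i j l) (swapVar m p)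
      = aeval (wsub q i j l ∘ (Equiv.swap m (cycS m))) p := by
    unfold swapVar; rw [aeval_rename]
  rw [hsw] at heq
  have hAne : wsub q i j l (cycS m) - wsub q i j l m ≠ 0 :=
    aux_gdiff_ne q hq0 hq2 hq4 hq24 i j l m (cycS m) hms hij hjl
  have hij' : i.val < j.val := hij
  have hjl' : j.val < l.val := hjl
  have hlv : l.val < 2 * n := l.isLt
  suffices hRHS : (C q * wsub q i j l m - C q⁻¹ * wsub q i j l (cycS m)) *
      (aeval (wsub q i j l ∘ (Equiv.swap m (cycS m))) p) = 0 by
    exact (mul_eq_zero.mp (heq.trans hRHS)).resolve_left hAne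
  by_cases hbl : l.val = 2 * n - 1
  · -- l = m
    have hlm : l = m := Fin.ext (by omega)
    by_cases hbi : i.val = 0
    · -- i = cycS m : the case where the `u` factor vanishes
      have hcs : cycS m = i := Fin.ext (by omega)
      have e1 : wsub q i j l m = C (q ^ 4) * X i := by
        unfold wsub
        rw [if_neg (by rw [← hlm]; exact Ne.symm (ne_of_lt hjl)), if_pos hlm.symm]
      have e2 : wsub q i j l i = X i := by
        unfold wsub
        rw [if_neg (ne_of_lt hij), if_neg (ne_of_lt (hij.trans hjl))]
      rw [hcs, e1, e2]
      nth_rewrite 2 [show (X i : MvPolynomial (Fin (2 * n)) F) = C 1 * X i from by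
        rw [C_1, one_mul]]
      rw [aux_u_zero q (q ^ 4) 1 i (by rw [hinv]; ring), zero_mul]
    · -- case B : l = m, i ≥ 1
      set z0 : Fin (2 * n) := ⟨0, by omega⟩ with hz0def
      have hcs : cycS m = z0 := Fin.ext (by simpa using hsv)
      have hz0i : z0 < i := by rw [Fin.lt_def]; omega
      have hiz0 : i ≠ z0 := Fin.ne_of_val_ne (by omega)
      have him : i ≠ m := Fin.ne_of_val_ne (by omega)
      have hjz0 : j ≠ z0 := Fin.ne_of_val_ne (by omega)
      have hjm : j ≠ m := Fin.ne_of_val_ne (by omega)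
      have hmz0 : m ≠ z0 := Fin.ne_of_val_ne (by omega)
      have hz : aeval (wsub q i j l ∘ (Equiv.swap m (cycS m))) p = 0 := by
        rw [hcs, hlm]
        apply aux_vanish_via _
          (aeval (fun t => if t = z0 then C (q ^ 4) * X i else if t = m then X z0 else X t))
          (wsub q z0 i j) ?_ p (Hvan z0 i j hz0i hij)
        intro t
        simp only [Function.comp_apply]
        by_cases ht1 : t = z0
        · rw [ht1]
          rw [Equiv.swap_apply_right]
          unfold wsub
          rw [if_neg hjm.symm, if_pos rfl, if_neg hiz0.symm, if_neg hjz0.symm,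
            aeval_X, if_pos rfl]
        · by_cases ht2 : t = m
          · rw [ht2]
            rw [Equiv.swap_apply_left]
            unfold wsub
            rw [if_neg hjz0.symm, if_neg (Ne.symm hmz0), if_neg him.symm, if_neg hjm.symm,
              aeval_X, if_neg hmz0, if_pos rfl]
          · rw [Equiv.swap_apply_of_ne_of_ne ht2 ht1]
            by_cases ht3 : t = i
            · rw [ht3]
              unfold wsub
              rw [if_neg (ne_of_lt hij), if_neg (by rw [← hlm]; exact ne_of_lt (hij.trans hjl)),
                if_pos rfl]
              rw [map_mul, aeval_C, aeval_X, algebraMap_eq, if_pos rfl, ← mul_assoc, ← C_mul,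
                show q ^ 2 * q ^ 4 = 1 from by linear_combination hq6, C_1, one_mul]
            · by_cases ht4 : t = j
              · rw [ht4]
                unfold wsub
                rw [if_pos rfl, if_neg (Ne.symm (ne_of_lt hij)), if_pos rfl]
                rw [map_mul, aeval_C, aeval_X, algebraMap_eq, if_pos rfl, ← mul_assoc, ← C_mul,
                  show q ^ 4 * q ^ 4 = q ^ 2 from by linear_combination q ^ 2 * hq6]
              · unfold wsub
                rw [if_neg ht4, if_neg ht2, if_neg ht3, if_neg ht4, aeval_X,
                  if_neg ht1, if_neg ht2]
      rw [hz, mul_zero]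
  · by_cases hbi : i.val = 0
    · -- case C : i = cycS m = z0, l < m
      have hcs : cycS m = i := Fin.ext (by omega)
      have hil : i ≠ l := ne_of_lt (hij.trans hjl)
      have hlmv : l.val < 2 * n - 1 := by omega
      have hjlm : j < l := hjl
      have hlm' : l < m := by rw [Fin.lt_def]; omega
      have hjm : j ≠ m := Fin.ne_of_val_ne (by omega)
      have hlm : l ≠ m := Fin.ne_of_val_ne (by omega)
      have him : i ≠ m := Fin.ne_of_val_ne (by omega)
      have hji : j ≠ i := Ne.symm (ne_of_lt hij)
      have hz : aeval (wsub q i j l ∘ (Equiv.swap m (cycS m))) p = 0 := by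
        rw [hcs]
        apply aux_vanish_via _
          (aeval (fun t => if t = j then C (q ^ 2) * X i else if t = i then X m else X t))
          (wsub q j l m) ?_ p (Hvan j l m hjl hlm')
        intro t
        simp only [Function.comp_apply]
        by_cases ht1 : t = j
        · rw [ht1]
          rw [Equiv.swap_apply_of_ne_of_ne hjm hji]
          unfold wsub
          rw [if_pos rfl, if_neg (ne_of_lt hjl), if_neg hjm, aeval_X, if_pos rfl]
        · by_cases ht2 : t = l
          · rw [ht2]
            rw [Equiv.swap_apply_of_ne_of_ne hlm (Ne.symm hil)]
            unfold wsub
            rw [if_neg (Ne.symm (ne_of_lt hjl)), if_pos rfl, if_pos rfl]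
            rw [map_mul, aeval_C, aeval_X, algebraMap_eq, if_pos rfl, ← mul_assoc, ← C_mul,
              show q ^ 2 * q ^ 2 = q ^ 4 from by ring]
          · by_cases ht3 : t = i
            · rw [ht3]
              rw [Equiv.swap_apply_right]
              unfold wsub
              rw [if_neg hjm.symm, if_neg hlm.symm, if_neg hil, if_neg him,
                aeval_X, if_neg hji.symm, if_pos rfl]
            · by_cases ht4 : t = m
              · rw [ht4]
                rw [Equiv.swap_apply_left]
                unfold wsub
                rw [if_neg (ne_of_lt hij), if_neg hil, if_neg (Ne.symm hlm), if_pos rfl]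
                rw [map_mul, aeval_C, aeval_X, algebraMap_eq, if_pos rfl, ← mul_assoc, ← C_mul,
                  show q ^ 4 * q ^ 2 = 1 from by linear_combination hq6, C_1, one_mul]
              · rw [Equiv.swap_apply_of_ne_of_ne ht4 ht3]
                unfold wsub
                rw [if_neg ht1, if_neg ht2, if_neg ht2, if_neg ht4, aeval_X,
                  if_neg ht1, if_neg ht3]
      rw [hz, mul_zero]
    · -- case D : triple not touching m, cycS m
      have ho1 : Equiv.swap m (cycS m) i < Equiv.swap m (cycS m) j := by
        rw [Fin.lt_def, aux_swap_val, aux_swap_val]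
        split_ifs <;> omega
      have ho2 : Equiv.swap m (cycS m) j < Equiv.swap m (cycS m) l := by
        rw [Fin.lt_def, aux_swap_val, aux_swap_val]
        split_ifs <;> omega
      rw [aux_good q p Hvan m (cycS m) i j l (ne_of_lt hjl) ho1 ho2, mul_zero]

end WheelAux


theorem stmt4 (n : ℕ) (hn : 0 < n) :
    (∀ (k : ℕ) (_ : 1 ≤ k) (_ : k ≤ 2*n - 1)
      (D : MvPolynomial (Fin (2*n)) (RatFunc ℚ) → MvPolynomial (Fin (2*n)) (RatFunc ℚ)),
      IsDOp qQ (⟨k - 1, by omega⟩ : Fin (2*n)) D →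
      ∀ p, IsWheel qQ n p → IsWheel qQ n (D p)) ∧
    (∀ (D : MvPolynomial (Fin (2*n)) ℂ → MvPolynomial (Fin (2*n)) ℂ),
      IsDOp qC (⟨2*n - 1, by omega⟩ : Fin (2*n)) D →
      ∀ p, IsWheel qC n p → IsWheel qC n (D p)) := by
  constructor
  · intro k hk1 hk2 D hD p hp
    have hq0 : qQ ≠ 0 := RatFunc.X_ne_zero
    have key : ∀ a b : ℕ, a ≠ b → qQ ^ a ≠ qQ ^ b := by
      intro a b hab h
      have h2 : (Polynomial.X : Polynomial ℚ) ^ a = Polynomial.X ^ b :=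
        RatFunc.algebraMap_injective ℚ
          (by rw [map_pow, map_pow, RatFunc.algebraMap_X]; exact h)
      have h3 := congrArg Polynomial.natDegree h2
      rw [Polynomial.natDegree_X_pow, Polynomial.natDegree_X_pow] at h3
      exact hab h3
    exact aux_partLin qQ hq0 (by simpa using key 2 0 (by norm_num))
      (by simpa using key 4 0 (by norm_num)) (key 2 4 (by norm_num)) n hn
      ⟨k - 1, by omega⟩ (by show k - 1 + 1 < 2 * n; omega) D hD p hp
  · intro D hD p hp
    have hpne : ((Real.pi : ℂ)) ≠ 0 := Complex.ofReal_ne_zero.mpr Real.pi_ne_zero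
    have hne : (2 * (Real.pi : ℂ) * Complex.I) ≠ 0 := by
      simp [hpne, Complex.I_ne_zero]
    have hq0 : qC ≠ 0 := Complex.exp_ne_zero _
    have hq3 : qC ^ 3 = 1 := by
      unfold qC
      rw [← Complex.exp_nat_mul,
        show (3 : ℕ) * (2 * (Real.pi : ℂ) * Complex.I / 3) = 2 * (Real.pi : ℂ) * Complex.I
          from by push_cast; ring]
      exact Complex.exp_two_pi_mul_I
    have hq1 : qC ≠ 1 := by
      unfold qC
      intro h
      rw [Complex.exp_eq_one_iff] at h
      obtain ⟨k, hk⟩ := h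
      have h3 : (1 : ℂ) * (2 * (Real.pi : ℂ) * Complex.I)
          = (3 * (k : ℂ)) * (2 * (Real.pi : ℂ) * Complex.I) := by
        linear_combination 3 * hk
      have h4 : (1 : ℂ) = 3 * (k : ℂ) := mul_right_cancel₀ hne h3
      have h5 : (1 : ℤ) = 3 * k := by exact_mod_cast h4
      omega
    exact aux_partCyc qC hq0 hq3 hq1 n hn ⟨2 * n - 1, by omega⟩ rfl D hD p hp
end

section
/- For every 1 ≤ i ≤ 2n with i ∉ {n, 2n}, one has D_i(Ψ_{()_n}) = (q + q^{−1})·Ψ_{()_n}. -/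
attribute [local instance] Classical.propDecidable

open MvPolynomial

/-! Both halves of `Ψ_{()_n}` are products `∏_{x<y} (q z_x - q⁻¹ z_y)`. If `z_k` and `z_{k+1}`
lie in the same half, `S_k` permutes all factors except `q z_k - q⁻¹ z_{k+1}`, which it turns
into `q z_{k+1} - q⁻¹ z_k`; hence `(q z_k - q⁻¹ z_{k+1}) S_k Ψ = (q z_{k+1} - q⁻¹ z_k) Ψ`, and
then `(z_{k+1} - z_k) D_k Ψ = (q + q⁻¹)(z_{k+1} - z_k) Ψ`. The condition `i ∉ {n, 2n}` says
exactly that `z_i` and `z_{i+1}` lie in the same half. -/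

section SwapAdjacent

variable {ι : Type*} [LinearOrder ι] {a b : ι}

theorem CovBy.swap_lt_swap (hab : a ⋖ b) {x y : ι} (hxy : x < y) (hne : (x, y) ≠ (a, b)) :
    Equiv.swap a b x < Equiv.swap a b y := by
  have := hab.lt
  have : x < b → x ≤ a := hab.le_of_lt
  have : a < y → b ≤ y := hab.ge_of_gt
  rw [Equiv.swap_apply_def, Equiv.swap_apply_def]
  split_ifs <;> subst_vars <;> simp_all <;> order

theorem CovBy.swap_pair_ne (hab : a ⋖ b) {x y : ι} (hxy : x < y) :
    (Equiv.swap a b x, Equiv.swap a b y) ≠ (a, b) := by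
  simp only [ne_eq, Prod.mk.injEq, Equiv.swap_apply_eq_iff, Equiv.swap_apply_left,
    Equiv.swap_apply_right]
  rintro ⟨rfl, rfl⟩
  exact hxy.not_gt hab.lt

end SwapAdjacent

namespace MvPolynomial

variable {ι κ R : Type*} [CommRing R]

noncomputable def ltPairProd [Fintype ι] [LinearOrder ι] (u v : R) : MvPolynomial ι R :=
  ∏ p ∈ Finset.univ.filter (fun p : ι × ι => p.1 < p.2), (C u * X p.1 - C v * X p.2)

theorem mul_rename_swap_ltPairProd [Fintype ι] [LinearOrder ι] (u v : R) {a b : ι}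
    (hab : a ⋖ b) :
    (C u * X a - C v * X b) * rename (Equiv.swap a b) (ltPairProd u v) =
      (C u * X b - C v * X a) * ltPairProd (ι := ι) u v := by
  set σ := Equiv.swap a b
  set L : ι × ι → MvPolynomial ι R := fun p => C u * X p.1 - C v * X p.2
  set E := (Finset.univ.filter fun p : ι × ι => p.1 < p.2).erase (a, b)
  have hmem : (a, b) ∈ Finset.univ.filter fun p : ι × ι => p.1 < p.2 := by simpa using hab.lt
  have hE : ∀ p ∈ E, (σ p.1, σ p.2) ∈ E := by
    intro p hp
    simp only [E, Finset.mem_erase, Finset.mem_filter, Finset.mem_univ, true_and] at hp ⊢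
    exact ⟨hab.swap_pair_ne hp.2, hab.swap_lt_swap hp.2 hp.1⟩
  have hperm : ∏ p ∈ E, L (σ p.1, σ p.2) = ∏ p ∈ E, L p :=
    Finset.prod_nbij' (fun p => (σ p.1, σ p.2)) (fun p => (σ p.1, σ p.2)) hE hE
      (fun _ _ => by simp [σ]) (fun _ _ => by simp [σ]) fun _ _ => rfl
  have hrename : rename σ (ltPairProd u v) = ∏ p ∈ Finset.univ.filter (fun p : ι × ι => p.1 < p.2),
      L (σ p.1, σ p.2) := by
    simp [ltPairProd, L, map_prod]
  rw [hrename, ltPairProd, ← Finset.mul_prod_erase _ _ hmem, ← Finset.mul_prod_erase _ L hmem,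
    hperm]
  simp only [L, σ, Equiv.swap_apply_left, Equiv.swap_apply_right]
  ring

theorem mul_rename_swap_rename_ltPairProd [Fintype ι] [LinearOrder ι] [DecidableEq κ]
    (u v : R) {e : ι → κ} (he : Function.Injective e) {a b : ι} (hab : a ⋖ b) :
    (C u * X (e a) - C v * X (e b)) * rename (Equiv.swap (e a) (e b)) (rename e (ltPairProd u v)) =
      (C u * X (e b) - C v * X (e a)) * rename e (ltPairProd u v) := by
  have h := congrArg (rename e) (mul_rename_swap_ltPairProd u v hab)
  simp only [map_mul, map_sub, rename_C, rename_X, rename_rename] at h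
  rwa [rename_rename, he.swap_comp]

theorem rename_swap_rename_of_notMem_range [DecidableEq κ] {e : ι → κ} {x y : κ}
    (hx : x ∉ Set.range e) (hy : y ∉ Set.range e) (p : MvPolynomial ι R) :
    rename (Equiv.swap x y) (rename e p) = rename e p := by
  rw [rename_rename, show ⇑(Equiv.swap x y) ∘ e = e by
    ext t; exact Equiv.swap_apply_of_ne_of_ne (fun h => hx ⟨t, h⟩) fun h => hy ⟨t, h⟩]

theorem mul_rename_swap_mul_rename_ltPairProd [Fintype ι] [LinearOrder ι] [DecidableEq κ]
    (u v c : R) {e₁ e₂ : ι → κ} (he₁ : Function.Injective e₁) {a b : ι} (hab : a ⋖ b)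
    (ha : e₁ a ∉ Set.range e₂) (hb : e₁ b ∉ Set.range e₂) :
    (C u * X (e₁ a) - C v * X (e₁ b)) * rename (Equiv.swap (e₁ a) (e₁ b))
        (C c * (rename e₁ (ltPairProd u v) * rename e₂ (ltPairProd u v))) =
      (C u * X (e₁ b) - C v * X (e₁ a)) *
        (C c * (rename e₁ (ltPairProd u v) * rename e₂ (ltPairProd u v))) := by
  rw [map_mul, map_mul, rename_C, rename_swap_rename_of_notMem_range ha hb]
  linear_combination (C c * rename e₂ (ltPairProd u v)) *
    mul_rename_swap_rename_ltPairProd u v he₁ hab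

end MvPolynomial

def upperHalf (n : ℕ) (t : Fin n) : Fin (2 * n) := ⟨n + t, by omega⟩

theorem upperHalf_injective (n : ℕ) : Function.Injective (upperHalf n) := fun s t h =>
  Fin.ext (by simpa [upperHalf] using congrArg Fin.val h)

theorem castLE_notMem_range_upperHalf {n : ℕ} (hn : n ≤ 2 * n) (t : Fin n) :
    Fin.castLE hn t ∉ Set.range (upperHalf n) := by
  rintro ⟨s, hs⟩
  have := congrArg Fin.val hs
  simp only [Fin.val_castLE, upperHalf] at this
  omega

theorem upperHalf_notMem_range_castLE {n : ℕ} (hn : n ≤ 2 * n) (t : Fin n) :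
    upperHalf n t ∉ Set.range (Fin.castLE hn) := by
  rintro ⟨s, hs⟩
  have := congrArg Fin.val hs
  simp only [Fin.val_castLE, upperHalf] at this
  omega

theorem PsiEmpty_eq {F : Type*} [Field F] (q : F) (n : ℕ) :
    PsiEmpty q n = C ((q - q⁻¹) ^ (n * (n - 1)))⁻¹ *
      (rename (Fin.castLE (by omega : n ≤ 2 * n)) (ltPairProd q q⁻¹) *
        rename (upperHalf n) (ltPairProd q q⁻¹)) := by
  rw [PsiEmpty, ltPairProd, map_prod, map_prod, ← Finset.prod_mul_distrib]
  simp only [map_sub, map_mul, rename_C, rename_X]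
  congr 2
  ext; simp

theorem cycS_val_of_lt {m : ℕ} {k : Fin m} (hk : (k : ℕ) + 1 < m) : (cycS k : ℕ) = k + 1 :=
  Nat.mod_eq_of_lt hk

theorem mul_swapVar_PsiEmpty {F : Type*} [Field F] (q : F) {n : ℕ} {k : Fin (2 * n)}
    (hk : (k : ℕ) + 1 < 2 * n) (hkn : (k : ℕ) + 1 ≠ n) :
    (C q * X k - C q⁻¹ * X (cycS k)) * swapVar k (PsiEmpty q n) =
      (C q * X (cycS k) - C q⁻¹ * X k) * PsiEmpty q n := by
  have hn : n ≤ 2 * n := by omega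
  have hcyc := cycS_val_of_lt hk
  rw [swapVar, PsiEmpty_eq]
  rcases Nat.lt_or_gt_of_ne hkn with hlow | hhigh
  · obtain ⟨a, b, hab, rfl, hb⟩ : ∃ a b : Fin n, (b : ℕ) = a + 1 ∧
        Fin.castLE hn a = k ∧ Fin.castLE hn b = cycS k :=
      ⟨⟨k, by omega⟩, ⟨k + 1, hlow⟩, rfl, rfl, Fin.ext hcyc.symm⟩
    rw [← hb]
    exact mul_rename_swap_mul_rename_ltPairProd _ _ _ (Fin.castLE_injective hn)
      (Fin.covBy_iff.2 (Nat.covBy_iff_add_one_eq.2 hab.symm))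
      (castLE_notMem_range_upperHalf hn a) (castLE_notMem_range_upperHalf hn b)
  · obtain ⟨a, b, hab, rfl, hb⟩ : ∃ a b : Fin n, (b : ℕ) = a + 1 ∧
        upperHalf n a = k ∧ upperHalf n b = cycS k :=
      ⟨⟨k - n, by omega⟩, ⟨k + 1 - n, by omega⟩, by simp only; omega,
        Fin.ext (by simp only [upperHalf]; omega), Fin.ext (by simp only [hcyc, upperHalf]; omega)⟩
    rw [← hb, mul_comm (rename (Fin.castLE _) _)]
    exact mul_rename_swap_mul_rename_ltPairProd _ _ _ (upperHalf_injective n)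
      (Fin.covBy_iff.2 (Nat.covBy_iff_add_one_eq.2 hab.symm))
      (upperHalf_notMem_range_castLE hn a) (upperHalf_notMem_range_castLE hn b)

theorem IsDOp.apply_eq_of_mul_swapVar {F : Type*} [Field F] {N : ℕ} {q : F} {k : Fin N}
    {D : MvPolynomial (Fin N) F → MvPolynomial (Fin N) F} (hD : IsDOp q k D)
    (hk : cycS k ≠ k) {f : MvPolynomial (Fin N) F}
    (hf : (C q * X k - C q⁻¹ * X (cycS k)) * swapVar k f = (C q * X (cycS k) - C q⁻¹ * X k) * f) :
    D f = C (q + q⁻¹) * f := by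
  apply mul_left_cancel₀ (sub_ne_zero.2 ((X_injective (σ := Fin N) (R := F)).ne hk))
  rw [hD, mul_sub, hf, map_add]
  ring

theorem stmt9 (n : ℕ) (i : ℕ) (hi1 : 1 ≤ i) (hi2 : i ≤ 2*n) (hin : i ≠ n) (hi2n : i ≠ 2*n)
    (D : MvPolynomial (Fin (2*n)) (RatFunc ℚ) → MvPolynomial (Fin (2*n)) (RatFunc ℚ))
    (hD : IsDOp qQ (⟨i - 1, by omega⟩ : Fin (2*n)) D) :
    D (PsiEmpty qQ n) = MvPolynomial.C (qQ + qQ⁻¹) * PsiEmpty qQ n := by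
  set k : Fin (2 * n) := ⟨i - 1, by omega⟩
  have hk : (k : ℕ) + 1 < 2 * n := by simp only [k]; omega
  exact hD.apply_eq_of_mul_swapVar (Fin.ne_of_val_ne (by rw [cycS_val_of_lt hk]; omega))
    (mul_swapVar_PsiEmpty qQ hk (by simp only [k]; omega))
end

section
/- For 1 ≤ i, j, k ≤ 2n with i ≠ j (and with k+1 read as 1 when k = 2n), the following explicit formulas hold. (1) D_k(f(i,j)) equals (q+q^{−1})·f(k,k+1) if (i,j)=(k,k+1); −(q+q^{−1})·f(k,k+1) if (i,j)=(k+1,k); q·f(k,k+1) if i=k and j≠k+1; −q·f(k,k+1) if i=k+1 and j≠k; −q^{−1}·f(k,k+1) if j=k and i≠k+1; q^{−1}·f(k,k+1) if j=k+1 and i≠k; and 0 if {i,j} ∩ {k,k+1} = ∅. (2) D_k(g(i)) equals −q^{−1}·f(k,k+1) if i=k; q^{−1}·f(k,k+1) if i=k+1; and 0 otherwise. (3) D_k(h(i)) equals q·f(k,k+1) if i=k; −q·f(k,k+1) if i=k+1; and 0 otherwise. -/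
attribute [local instance] Classical.propDecidable

open MvPolynomial

theorem stmt16 (n : ℕ) (k : Fin (2*n))
    (D : MvPolynomial (Fin (2*n)) (RatFunc ℚ) → MvPolynomial (Fin (2*n)) (RatFunc ℚ))
    (hD : IsDOp qQ k D) :
    (∀ i j : Fin (2*n), i ≠ j →
      D (fP qQ i j) =
        if i = k ∧ j = cycS k then C (qQ + qQ⁻¹) * fP qQ k (cycS k)
        else if i = cycS k ∧ j = k then -(C (qQ + qQ⁻¹)) * fP qQ k (cycS k)
        else if i = k then C qQ * fP qQ k (cycS k)
        else if i = cycS k then -(C qQ) * fP qQ k (cycS k)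
        else if j = k then -(C qQ⁻¹) * fP qQ k (cycS k)
        else if j = cycS k then C qQ⁻¹ * fP qQ k (cycS k)
        else 0) ∧
    (∀ i : Fin (2*n),
      D (gP qQ i) =
        if i = k then -(C qQ⁻¹) * fP qQ k (cycS k)
        else if i = cycS k then C qQ⁻¹ * fP qQ k (cycS k)
        else 0) ∧
    (∀ i : Fin (2*n),
      D (hP qQ i) =
        if i = k then C qQ * fP qQ k (cycS k)
        else if i = cycS k then -(C qQ) * fP qQ k (cycS k)
        else 0) := by
  have h2n : 2 ≤ 2*n := by have := k.isLt; omega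
  set b := cycS k with hb
  have hkb : k ≠ b := by
    intro h
    have hval : k.val = (k.val + 1) % (2*n) := congrArg Fin.val h
    rcases Nat.lt_or_ge (k.val + 1) (2*n) with h' | h'
    · rw [Nat.mod_eq_of_lt h'] at hval; omega
    · have hk := k.isLt
      have he : k.val + 1 = 2*n := by omega
      rw [he, Nat.mod_self] at hval
      omega
  have hX : (X b - X k : MvPolynomial (Fin (2*n)) (RatFunc ℚ)) ≠ 0 := by
    intro h
    exact hkb (MvPolynomial.X_injective (sub_eq_zero.mp h)).symm
  have key : ∀ f P : MvPolynomial (Fin (2*n)) (RatFunc ℚ),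
      (C qQ * X k - C qQ⁻¹ * X b) * (swapVar k f - f) = (X b - X k) * P → D f = P := by
    intro f P h
    exact mul_left_cancel₀ hX ((hD f).trans h)
  have swf : ∀ i j : Fin (2*n), swapVar k (fP qQ i j) =
      fP qQ (Equiv.swap k b i) (Equiv.swap k b j) := by
    intro i j; simp [swapVar, fP, ← hb]
  have swg : ∀ i : Fin (2*n), swapVar k (gP qQ i) = gP qQ (Equiv.swap k b i) := by
    intro i; simp [swapVar, gP, ← hb]
  have swh : ∀ i : Fin (2*n), swapVar k (hP qQ i) = hP qQ (Equiv.swap k b i) := by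
    intro i; simp [swapVar, hP, ← hb]
  refine ⟨fun i j hij => ?_, fun i => ?_, fun i => ?_⟩
  · rcases eq_or_ne i k with rfl | hik
    · rcases eq_or_ne j b with rfl | hjb
      · rw [if_pos ⟨rfl, rfl⟩]
        apply key
        rw [swf, Equiv.swap_apply_left, Equiv.swap_apply_right]
        simp only [fP, map_add]
        ring
      · rw [if_neg (fun h => hjb h.2), if_neg (fun h => hkb h.1), if_pos rfl]
        apply key
        rw [swf, Equiv.swap_apply_left, Equiv.swap_apply_of_ne_of_ne hij.symm hjb]
        simp only [fP]
        ring
    · rcases eq_or_ne i b with rfl | hib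
      · rcases eq_or_ne j k with rfl | hjk
        · rw [if_neg (fun h => hkb h.1.symm), if_pos ⟨rfl, rfl⟩]
          apply key
          rw [swf, Equiv.swap_apply_right, Equiv.swap_apply_left]
          simp only [fP, map_add]
          ring
        · rw [if_neg (fun h => hik h.1), if_neg (fun h => hjk h.2),
            if_neg hik, if_pos rfl]
          apply key
          rw [swf, Equiv.swap_apply_right, Equiv.swap_apply_of_ne_of_ne hjk hij.symm]
          simp only [fP]
          ring
      · rcases eq_or_ne j k with rfl | hjk
        · rw [if_neg (fun h => hik h.1), if_neg (fun h => hib h.1),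
            if_neg hik, if_neg hib, if_pos rfl]
          apply key
          rw [swf, Equiv.swap_apply_of_ne_of_ne hik hib, Equiv.swap_apply_left]
          simp only [fP]
          ring
        · rcases eq_or_ne j b with rfl | hjb
          · rw [if_neg (fun h => hik h.1), if_neg (fun h => hib h.1),
              if_neg hik, if_neg hib, if_neg hjk, if_pos rfl]
            apply key
            rw [swf, Equiv.swap_apply_of_ne_of_ne hik hib, Equiv.swap_apply_right]
            simp only [fP]
            ring
          · rw [if_neg (fun h => hik h.1), if_neg (fun h => hib h.1),
              if_neg hik, if_neg hib, if_neg hjk, if_neg hjb]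
            apply key
            rw [swf, Equiv.swap_apply_of_ne_of_ne hik hib,
              Equiv.swap_apply_of_ne_of_ne hjk hjb]
            ring
  · rcases eq_or_ne i k with rfl | hik
    · rw [if_pos rfl]
      apply key
      rw [swg, Equiv.swap_apply_left]
      simp only [gP, fP]
      ring
    · rcases eq_or_ne i b with rfl | hib
      · rw [if_neg hik, if_pos rfl]
        apply key
        rw [swg, Equiv.swap_apply_right]
        simp only [gP, fP]
        ring
      · rw [if_neg hik, if_neg hib]
        apply key
        rw [swg, Equiv.swap_apply_of_ne_of_ne hik hib]
        ring
  · rcases eq_or_ne i k with rfl | hik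
    · rw [if_pos rfl]
      apply key
      rw [swh, Equiv.swap_apply_left]
      simp only [hP, fP]
      ring
    · rcases eq_or_ne i b with rfl | hib
      · rw [if_neg hik, if_pos rfl]
        apply key
        rw [swh, Equiv.swap_apply_right]
        simp only [hP, fP]
        ring
      · rw [if_neg hik, if_neg hib]
        apply key
        rw [swh, Equiv.swap_apply_of_ne_of_ne hik hib]
        ring
end
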